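/- The component identity of the dynamical Yang–Baxter equation holds: for all ℏ, z₁, z₂, z₃ ∈ ℂ and all x, y ∈ ℂ (playing the roles of q_i−q_k and q_k−q_j respectively), R^{x}_{12}(z₁−z₂) R^{y}_{13}(z₁−z₃) R^{x}_{23}(z₂−z₃) + φ(ℏ,x)φ(ℏ,−x) · R^{x+y}_{13}(z₁−z₃) = R^{y}_{23}(z₂−z₃) R^{x}_{13}(z₁−z₃) R^{y}_{12}(z₁−z₂) + φ(ℏ,y)φ(ℏ,−y) · R^{x+y}_{13}(z₁−z₃) in Mat_N(ℂ)^{⊗3}. -/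

import Mathlib

open Matrix Kronecker BigOperators

/-- The permutation operator `P₁₂ = Σ_{i,j} e_{ij} ⊗ e_{ji}` on `ℂ^N ⊗ ℂ^N`. -/
def Perm (N : ℕ) : Matrix (Fin N × Fin N) (Fin N × Fin N) ℂ :=
  Matrix.of fun p q => if p.1 = q.2 ∧ p.2 = q.1 then 1 else 0

/-- Embedding `X ↦ X₁₂` of `Mat_N ⊗ Mat_N` into the tensor factors 1,2 of `Mat_N^{⊗3}`. -/
def e12 {N : ℕ} (X : Matrix (Fin N × Fin N) (Fin N × Fin N) ℂ) :
    Matrix (Fin N × Fin N × Fin N) (Fin N × Fin N × Fin N) ℂ :=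
  Matrix.of fun p q =>
    X (p.1, p.2.1) (q.1, q.2.1) * (if p.2.2 = q.2.2 then (1 : ℂ) else 0)

/-- Embedding `X ↦ X₁₃` of `Mat_N ⊗ Mat_N` into the tensor factors 1,3 of `Mat_N^{⊗3}`. -/
def e13 {N : ℕ} (X : Matrix (Fin N × Fin N) (Fin N × Fin N) ℂ) :
    Matrix (Fin N × Fin N × Fin N) (Fin N × Fin N × Fin N) ℂ :=
  Matrix.of fun p q =>
    X (p.1, p.2.2) (q.1, q.2.2) * (if p.2.1 = q.2.1 then (1 : ℂ) else 0)

/-- Embedding `X ↦ X₂₃` of `Mat_N ⊗ Mat_N` into the tensor factors 2,3 of `Mat_N^{⊗3}`. -/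
def e23 {N : ℕ} (X : Matrix (Fin N × Fin N) (Fin N × Fin N) ℂ) :
    Matrix (Fin N × Fin N × Fin N) (Fin N × Fin N × Fin N) ℂ :=
  Matrix.of fun p q =>
    X (p.2.1, p.2.2) (q.2.1, q.2.2) * (if p.1 = q.1 then (1 : ℂ) else 0)

/-!
Put `u = z₁ - z₂`, `v = z₂ - z₃`. The AYBE, together with its image under the reversal of the
three tensor factors (again an identity between the `R`s, by skew-symmetry), rewrites both triple
products `R^x_12 R^y_13 R^x_23` and `R^y_23 R^x_13 R^y_12` as the same product
`R^x_12 R^{x+y}_23 R^y_12` minus a multiple of `R^{x+y}_13`; unitarity, in the form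
`R^a(u) R^{-a}(u) = (E u - E a) • 1`, identifies the multiples as `E u - E x` and
`E u - E (-y) = E u - E y`. So the two triple products differ by `(E x - E y) • R^{x+y}_13`,
which is the identity once `φ(ℏ,t) φ(ℏ,-t) = E ℏ - E t` is substituted.
-/

abbrev Mat₂ (N : ℕ) : Type := Matrix (Fin N × Fin N) (Fin N × Fin N) ℂ

section

variable {N : ℕ}

theorem Perm_eq_toMatrix_prodComm :
    Perm N = ((Equiv.prodComm (Fin N) (Fin N)).toPEquiv.toMatrix : Mat₂ N) := by
  ext p q
  simp [Perm, Prod.ext_iff, eq_comm, and_comm]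

theorem Perm_mul_mul_Perm (X : Mat₂ N) :
    Perm N * X * Perm N = X.submatrix Prod.swap Prod.swap := by
  rw [Perm_eq_toMatrix_prodComm, PEquiv.toMatrix_toPEquiv_mul, PEquiv.mul_toMatrix_toPEquiv]
  rfl

theorem e12_mul (X Y : Mat₂ N) : e12 (X * Y) = e12 X * e12 Y := by
  ext p q
  simp [e12, mul_apply, Fintype.sum_prod_type, ite_mul]

theorem e12_one : e12 (1 : Mat₂ N) = 1 := by
  ext p q
  simp only [e12, one_apply, Prod.ext_iff, of_apply]
  split_ifs <;> simp_all

theorem e12_smul (c : ℂ) (X : Mat₂ N) : e12 (c • X) = c • e12 X := by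
  ext p q
  simp [e12]

theorem e12_neg (X : Mat₂ N) : e12 (-X) = -e12 X := by
  ext p q
  simp [e12, neg_ite]

theorem e13_neg (X : Mat₂ N) : e13 (-X) = -e13 X := by
  ext p q
  simp [e13, neg_ite]

theorem e23_neg (X : Mat₂ N) : e23 (-X) = -e23 X := by
  ext p q
  simp [e23, neg_ite]

def reverseFactors : Fin N × Fin N × Fin N ≃ Fin N × Fin N × Fin N where
  toFun p := (p.2.2, p.2.1, p.1)
  invFun p := (p.2.2, p.2.1, p.1)

theorem e12_submatrix_reverseFactors (X : Mat₂ N) :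
    (e12 X).submatrix reverseFactors reverseFactors = e23 (X.submatrix Prod.swap Prod.swap) :=
  rfl

theorem e23_submatrix_reverseFactors (X : Mat₂ N) :
    (e23 X).submatrix reverseFactors reverseFactors = e12 (X.submatrix Prod.swap Prod.swap) :=
  rfl

theorem e13_submatrix_reverseFactors (X : Mat₂ N) :
    (e13 X).submatrix reverseFactors reverseFactors = e13 (X.submatrix Prod.swap Prod.swap) :=
  rfl

variable {R : ℂ → ℂ → Mat₂ N}

theorem submatrix_swap_of_skew (hskew : ∀ ℏ z : ℂ, R ℏ z = -(Perm N * R (-ℏ) (-z) * Perm N))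
    (ℏ z : ℂ) : (R ℏ z).submatrix Prod.swap Prod.swap = -R (-ℏ) (-z) := by
  rw [hskew (-ℏ), neg_neg, neg_neg, Perm_mul_mul_Perm, neg_neg]

theorem mul_neg_eq_smul_one_of_unitary {E : ℂ → ℂ}
    (hskew : ∀ ℏ z : ℂ, R ℏ z = -(Perm N * R (-ℏ) (-z) * Perm N))
    (hunit : ∀ ℏ z : ℂ, R ℏ z * (Perm N * R ℏ (-z) * Perm N) = (E ℏ - E z) • (1 : Mat₂ N))
    (ℏ z : ℂ) : R ℏ z * R (-ℏ) z = (E z - E ℏ) • 1 := by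
  have h := hunit ℏ z
  rw [Perm_mul_mul_Perm, submatrix_swap_of_skew hskew, neg_neg, mul_neg, neg_eq_iff_eq_neg] at h
  rw [h, ← neg_smul, neg_sub]

section AYBE

variable (hAYBE : ∀ ℏ η z₁ z₂ z₃ : ℂ,
      e12 (R ℏ (z₁ - z₂)) * e23 (R η (z₂ - z₃)) =
        e13 (R η (z₁ - z₃)) * e12 (R (ℏ - η) (z₁ - z₂)) +
          e23 (R (η - ℏ) (z₂ - z₃)) * e13 (R ℏ (z₁ - z₃)))
include hAYBE

theorem e12_mul_e23 (a b u v : ℂ) :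
    e12 (R a u) * e23 (R b v) =
      e13 (R b (u + v)) * e12 (R (a - b) u) + e23 (R (b - a) v) * e13 (R a (u + v)) := by
  simpa using hAYBE a b (u + v) v 0

-- The AYBE conjugated by the reversal of the tensor factors, which skew-symmetry brings back
-- to an identity between the `R`s themselves.
theorem e23_mul_e12 (hskew : ∀ ℏ z : ℂ, R ℏ z = -(Perm N * R (-ℏ) (-z) * Perm N))
    (a b u v : ℂ) :
    e23 (R a v) * e12 (R b u) =
      e13 (R b (u + v)) * e23 (R (a - b) v) + e12 (R (b - a) u) * e13 (R a (u + v)) := by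
  have h := congrArg (submatrix · reverseFactors reverseFactors)
    (e12_mul_e23 hAYBE (-a) (-b) (-v) (-u))
  simp only [submatrix_add, Pi.add_apply, ← submatrix_mul_equiv _ _ _ reverseFactors,
    e12_submatrix_reverseFactors, e23_submatrix_reverseFactors, e13_submatrix_reverseFactors,
    submatrix_swap_of_skew hskew, e12_neg, e13_neg, e23_neg, neg_mul_neg, neg_sub_neg, ← neg_add,
    neg_neg, neg_sub, add_comm v u] at h
  exact h

theorem e12_e13_e23_add_smul (hskew : ∀ ℏ z : ℂ, R ℏ z = -(Perm N * R (-ℏ) (-z) * Perm N))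
    {x y u v c : ℂ} (hinv : R x u * R (-x) u = c • 1) :
    e12 (R x u) * e13 (R y (u + v)) * e23 (R x v) + c • e13 (R (x + y) (u + v)) =
      e12 (R x u) * e23 (R (x + y) v) * e12 (R y u) := by
  have hinv₁₂ : e12 (R x u) * e12 (R (-x) u) = c • 1 := by
    rw [← e12_mul, hinv, e12_smul, e12_one]
  have h := e23_mul_e12 hAYBE hskew (x + y) y u v
  rw [add_sub_cancel_right, show y - (x + y) = -x by ring] at h
  rw [mul_assoc _ (e23 _), h, mul_add, ← mul_assoc, ← mul_assoc, hinv₁₂, smul_mul, one_mul]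

theorem e23_e13_e12_add_smul {x y u v c : ℂ} (hinv : R (-y) u * R y u = c • 1) :
    e23 (R y v) * e13 (R x (u + v)) * e12 (R y u) + c • e13 (R (x + y) (u + v)) =
      e12 (R x u) * e23 (R (x + y) v) * e12 (R y u) := by
  have hinv₁₂ : e12 (R (-y) u) * e12 (R y u) = c • 1 := by
    rw [← e12_mul, hinv, e12_smul, e12_one]
  have h := e12_mul_e23 hAYBE x (x + y) u v
  rw [add_sub_cancel_left, show x - (x + y) = -y by ring] at h
  rw [h, add_mul, mul_assoc (e13 _), hinv₁₂, Matrix.mul_smul, mul_one, add_comm]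

end AYBE

end

theorem component_identity_general (N : ℕ)
    (R : ℂ → ℂ → Matrix (Fin N × Fin N) (Fin N × Fin N) ℂ) (E : ℂ → ℂ)
    (hAYBE : ∀ ℏ η z₁ z₂ z₃ : ℂ,
      e12 (R ℏ (z₁ - z₂)) * e23 (R η (z₂ - z₃)) =
        e13 (R η (z₁ - z₃)) * e12 (R (ℏ - η) (z₁ - z₂)) +
          e23 (R (η - ℏ) (z₂ - z₃)) * e13 (R ℏ (z₁ - z₃)))
    (hskew : ∀ ℏ z : ℂ, R ℏ z = -(Perm N * R (-ℏ) (-z) * Perm N))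
    (hunit : ∀ ℏ z : ℂ, R ℏ z * (Perm N * R ℏ (-z) * Perm N) =
      (E ℏ - E z) • (1 : Matrix (Fin N × Fin N) (Fin N × Fin N) ℂ))
    (φ : ℂ → ℂ → ℂ)
    (hφunit : ∀ ℏ z : ℂ, φ ℏ z * φ ℏ (-z) = E ℏ - E z)
    (ℏ z₁ z₂ z₃ x y : ℂ) :
    e12 (R x (z₁ - z₂)) * e13 (R y (z₁ - z₃)) * e23 (R x (z₂ - z₃)) +
        (φ ℏ x * φ ℏ (-x)) • e13 (R (x + y) (z₁ - z₃)) =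
      e23 (R y (z₂ - z₃)) * e13 (R x (z₁ - z₃)) * e12 (R y (z₁ - z₂)) +
        (φ ℏ y * φ ℏ (-y)) • e13 (R (x + y) (z₁ - z₃)) := by
  -- `E` is even because the left side of `hφunit` is symmetric under `z ↦ -z`.
  have hE : E (-y) = E y := by
    have h := hφunit ℏ (-y)
    rw [neg_neg, mul_comm, hφunit] at h
    exact (sub_right_injective h).symm
  have hX := e12_e13_e23_add_smul hAYBE hskew (y := y) (v := z₂ - z₃)
    (mul_neg_eq_smul_one_of_unitary hskew hunit x (z₁ - z₂))
  have hY := e23_e13_e12_add_smul hAYBE (x := x) (v := z₂ - z₃)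
    (by simpa [hE] using mul_neg_eq_smul_one_of_unitary hskew hunit (-y) (z₁ - z₂))
  rw [sub_add_sub_cancel] at hX hY
  rw [hφunit, hφunit]
  linear_combination (norm := module) hX - hY

/-- The component identity (in the tensor component `E_ij ⊗ E_kk ⊗ E_ji`) of the quantum
dynamical Yang–Baxter equation, with `x = q_i - q_k` and `y = q_k - q_j`. -/
theorem component_identity (N : ℕ) (hN : 1 ≤ N)
    (R : ℂ → ℂ → Matrix (Fin N × Fin N) (Fin N × Fin N) ℂ) (E : ℂ → ℂ)
    (hAYBE : ∀ ℏ η z₁ z₂ z₃ : ℂ,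
      e12 (R ℏ (z₁ - z₂)) * e23 (R η (z₂ - z₃)) =
        e13 (R η (z₁ - z₃)) * e12 (R (ℏ - η) (z₁ - z₂)) +
          e23 (R (η - ℏ) (z₂ - z₃)) * e13 (R ℏ (z₁ - z₃)))
    (hskew : ∀ ℏ z : ℂ, R ℏ z = -(Perm N * R (-ℏ) (-z) * Perm N))
    (hunit : ∀ ℏ z : ℂ, R ℏ z * (Perm N * R ℏ (-z) * Perm N) =
      (E ℏ - E z) • (1 : Matrix (Fin N × Fin N) (Fin N × Fin N) ℂ))
    (φ : ℂ → ℂ → ℂ)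
    (hφunit : ∀ ℏ z : ℂ, φ ℏ z * φ ℏ (-z) = E ℏ - E z)
    (ℏ z₁ z₂ z₃ x y : ℂ) :
    e12 (R x (z₁ - z₂)) * e13 (R y (z₁ - z₃)) * e23 (R x (z₂ - z₃)) +
        (φ ℏ x * φ ℏ (-x)) • e13 (R (x + y) (z₁ - z₃)) =
      e23 (R y (z₂ - z₃)) * e13 (R x (z₁ - z₃)) * e12 (R y (z₁ - z₂)) +
        (φ ℏ y * φ ℏ (-y)) • e13 (R (x + y) (z₁ - z₃)) :=
  component_identity_general N R E hAYBE hskew hunit φ hφunit ℏ z₁ z₂ z₃ x y
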